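/- If s is a global section of the activation sheaf, n a node with s({n}) = n, and d any cell of X containing n, then s(d) = n and s(c) = n for every nonempty subset c of d. Hence the active region of n contains the closure of the star of {n}. -/

import Mathlib

/-- A finite abstract simplicial complex: a finite collection of nonempty finite
subsets of the vertex type `N`, closed under taking nonempty subsets. -/
def IsComplex {N : Type*} (X : Finset (Finset N)) : Prop :=
  ∀ c ∈ X, c.Nonempty ∧ ∀ b : Finset N, b ⊆ c → b.Nonempty → b ∈ X

/-- `n` lies in the stalk of the activation sheaf at the cell `c` (apart from `⊥`):
`n` shares a coface with `c`. -/
def InStalk {N : Type*} (X : Finset (Finset N)) (c : Finset N) (n : N) : Prop :=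
  ∃ d ∈ X, c ⊆ d ∧ n ∈ d

/-- A global section of the activation sheaf, encoded as a function assigning to each
cell either a node (`some n`) or `⊥` (`none`): the value at each cell lies in the
stalk, and the values are compatible with the restriction maps, which send `n` to `n`
when `n` is in the stalk of the larger cell and to `⊥` otherwise. -/
def IsSection {N : Type*} (X : Finset (Finset N)) (s : Finset N → Option N) : Prop :=
  (∀ c ∈ X, ∀ n : N, s c = some n → InStalk X c n) ∧
  (∀ c ∈ X, ∀ d ∈ X, c ⊆ d → ∀ n : N, s c = some n →
    (InStalk X d n → s d = some n) ∧ (¬ InStalk X d n → s d = none)) ∧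
  (∀ c ∈ X, ∀ d ∈ X, c ⊆ d → s c = none → s d = none)

/-! Restriction keeps a value `n` on every coface that still contains `n`, so `s {n} = n`
propagates up to every cell of the star. Conversely, if a cell carries `n`, each of its
faces carries `n` too: `⊥` restricts to `⊥`, and a value `m ≠ n` would restrict to `m`
or `⊥`. So the value `n` propagates back down to every face of the star. -/

theorem IsComplex.mem_of_subset {N : Type*} {X : Finset (Finset N)} (hX : IsComplex X)
    {b c : Finset N} (hc : c ∈ X) (hbc : b ⊆ c) (hb : b.Nonempty) : b ∈ X :=
  (hX c hc).2 b hbc hb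

namespace IsSection

variable {N : Type*} {X : Finset (Finset N)} {s : Finset N → Option N}

theorem eq_some_of_face_eq_some (hs : IsSection X s) {c d : Finset N} (hc : c ∈ X) (hd : d ∈ X)
    (hcd : c ⊆ d) {n : N} (hsc : s c = some n) (hnd : n ∈ d) : s d = some n :=
  (hs.2.1 c hc d hd hcd n hsc).1 ⟨d, hd, subset_rfl, hnd⟩

theorem face_eq_some_of_eq_some (hs : IsSection X s) {c d : Finset N} (hc : c ∈ X) (hd : d ∈ X)
    (hcd : c ⊆ d) {n : N} (hsd : s d = some n) : s c = some n := by
  cases hsc : s c with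
  | none => simpa [hsd] using hs.2.2 c hc d hd hcd hsc
  | some m =>
    obtain ⟨hstalk, hnot⟩ := hs.2.1 c hc d hd hcd m hsc
    by_cases hm : InStalk X d m
    · simpa [hsd, eq_comm] using hstalk hm
    · simpa [hsd] using hnot hm

end IsSection

theorem activeRegion_contains_closure_star_general {N : Type*}
    (X : Finset (Finset N)) (hX : IsComplex X)
    (s : Finset N → Option N) (hs : IsSection X s) (n : N)
    (hn : s {n} = some n) :
    ∀ d ∈ X, n ∈ d →
      s d = some n ∧ ∀ c : Finset N, c ⊆ d → c.Nonempty → s c = some n := by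
  intro d hd hnd
  have hsing : {n} ⊆ d := Finset.singleton_subset_iff.mpr hnd
  have hsd : s d = some n :=
    hs.eq_some_of_face_eq_some (hX.mem_of_subset hd hsing (Finset.singleton_nonempty n)) hd hsing hn hnd
  exact ⟨hsd, fun c hcd hc => hs.face_eq_some_of_eq_some (hX.mem_of_subset hd hcd hc) hd hcd hsd⟩

/-- If `s {n} = n` then every cell containing `n`, and every nonempty face of such a
cell, lies in the active region of `n`: the active region contains the closure of
the star of `{n}`. -/
theorem activeRegion_contains_closure_star {N : Type*} [DecidableEq N]
    (X : Finset (Finset N)) (hX : IsComplex X)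
    (s : Finset N → Option N) (hs : IsSection X s) (n : N)
    (hn : s {n} = some n) :
    ∀ d ∈ X, n ∈ d →
      s d = some n ∧ ∀ c : Finset N, c ⊆ d → c.Nonempty → s c = some n :=
  activeRegion_contains_closure_star_general X hX s hs n hn
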